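/- Let M be a matroid on a nonempty finite ground set E and fix an element e ∈ E. Then t_M(x,y,z,w) = t_M(0,y,z,w) + x · ∑_{S : e ∈ S ⊊ E} t_{M|S}(0,y,z,w) · t_{M/S}(x,0,z,w), where the sum ranges over all proper subsets S of E containing e. -/

import Mathlib

open Matroid MvPolynomial

variable {α : Type*}

-- The rank of a finset `A` in a matroid `M`: the maximal size of an independent subset of `A`.
open scoped Classical in
noncomputable def matRank [Fintype α] (M : Matroid α) (A : Finset α) : ℕ :=
  (A.powerset.filter (fun I : Finset α => M.Indep (I : Set α))).sup Finset.card

/-- The (finite) ground set of a matroid on a finite type, as a finset. -/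
noncomputable def groundFinset [Fintype α] (M : Matroid α) : Finset α :=
  M.E.toFinite.toFinset

/-- `g_M(x,y,z,w) = ∑_{A ⊆ E} (x−z)^{r−rk A} (y+z)^{rk A} (y−w)^{|A|−rk A}
(x+w)^{(|E|−|A|)−(r−rk A)}`, with `x = X 0`, `y = X 1`, `z = X 2`, `w = X 3`;
equivalently `g_M = (y+z)^r (x+w)^{|E|−r} T_M((x+y)/(y+z), (x+y)/(x+w))`. -/
noncomputable def gPoly [Fintype α] (M : Matroid α) : MvPolynomial (Fin 4) ℤ :=
  ∑ A ∈ (groundFinset M).powerset,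
    (X 0 - X 2) ^ (matRank M (groundFinset M) - matRank M A) *
      (X 1 + X 2) ^ (matRank M A) *
      (X 1 - X 3) ^ (A.card - matRank M A) *
      (X 0 + X 3) ^ (((groundFinset M).card - A.card)
        - (matRank M (groundFinset M) - matRank M A))

/-- Deletion of a set `D` from the matroid `M`: the restriction of `M` to `M.E \ D`. -/
def mdelete (M : Matroid α) (D : Set α) : Matroid α := M ↾ (M.E \ D)

/-- Contraction of a set `C` in the matroid `M`, defined via duality:
`M / C = (M✶ \ C)✶`, a matroid on `M.E \ C`. -/
def mcontract (M : Matroid α) (C : Set α) : Matroid α := (M✶ ↾ (M.E \ C))✶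

/-- Substituting `x := 0` (the variable `X 0`) into a polynomial in `x, y, z, w`. -/
noncomputable def subX0 : MvPolynomial (Fin 4) ℤ →ₐ[ℤ] MvPolynomial (Fin 4) ℤ :=
  aeval fun j => if j = 0 then 0 else X j

/-- Substituting `y := 0` (the variable `X 1`) into a polynomial in `x, y, z, w`. -/
noncomputable def subY0 : MvPolynomial (Fin 4) ℤ →ₐ[ℤ] MvPolynomial (Fin 4) ℤ :=
  aeval fun j => if j = 1 then 0 else X j

-- The collection of proper subsets `S ⊊ E` containing a fixed element `e`.
open scoped Classical in
noncomputable def propSubsetsContaining [Fintype α] (M : Matroid α) (e : α) :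
    Finset (Finset α) :=
  (groundFinset M).powerset.filter fun S => e ∈ S ∧ S ≠ groundFinset M


open scoped Classical

namespace MyTutte

variable [Fintype α] {M : Matroid α}

lemma matRank_def (M : Matroid α) (A : Finset α) :
    matRank M A = (A.powerset.filter (fun I : Finset α => M.Indep (I : Set α))).sup
      Finset.card := by
  rfl

lemma card_le_matRank {I A : Finset α} (hIA : I ⊆ A) (hI : M.Indep ↑I) :
    I.card ≤ matRank M A := by
  rw [matRank_def]
  refine Finset.le_sup (f := Finset.card) ?_
  simp only [Finset.mem_filter, Finset.mem_powerset]
  exact ⟨hIA, hI⟩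

lemma ncard_le_matRank {J : Set α} {A : Finset α} (hJA : J ⊆ ↑A) (hJ : M.Indep J) :
    J.ncard ≤ matRank M A := by
  have hfin : J.Finite := Set.Finite.subset (A.finite_toSet) hJA
  have := card_le_matRank (M := M) (I := hfin.toFinset) (A := A)
    (Set.Finite.toFinset_subset.mpr hJA) (by simpa using hJ)
  simpa [Set.ncard_eq_toFinset_card'] using this

lemma exists_matRank_basis' (M : Matroid α) (A : Finset α) :
    ∃ I : Finset α, I ⊆ A ∧ M.IsBasis' ↑I ↑A ∧ I.card = matRank M A := by
  have hne : (A.powerset.filter (fun I : Finset α => M.Indep (I : Set α))).Nonempty := by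
    refine ⟨∅, ?_⟩
    simp [Finset.empty_mem_powerset, M.empty_indep]
  obtain ⟨I, hmem, hcard⟩ := Finset.exists_mem_eq_sup _ hne Finset.card
  rw [← matRank_def] at hcard
  simp only [Finset.mem_filter, Finset.mem_powerset] at hmem
  refine ⟨I, hmem.1, ?_, hcard.symm⟩
  rw [Matroid.IsBasis', maximal_iff_forall_gt]
  refine ⟨⟨hmem.2, by exact_mod_cast hmem.1⟩, ?_⟩
  rintro J hlt ⟨hJi, hJA⟩
  have hJfin : J.Finite := Set.Finite.subset (A.finite_toSet) hJA
  have hle : J.ncard ≤ matRank M A := ncard_le_matRank hJA hJi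
  have hIJ : (↑I : Set α) ⊂ J := hlt
  have hlt2 : I.card < J.ncard := by
    have := Set.ncard_lt_ncard hIJ hJfin
    simpa using this
  omega

lemma Basis'_ncard {J : Set α} {A : Finset α} (hJ : M.IsBasis' J ↑A) :
    J.ncard = matRank M A := by
  obtain ⟨I, hIA, hI, hIcard⟩ := exists_matRank_basis' M A
  have h1 : (M ↾ (↑A : Set α)).IsBase J := Matroid.isBase_restrict_iff'.mpr hJ
  have h2 : (M ↾ (↑A : Set α)).IsBase ↑I := Matroid.isBase_restrict_iff'.mpr hI
  have := h1.encard_eq_encard_of_isBase h2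
  have hJfin : J.Finite := Set.Finite.subset (A.finite_toSet) hJ.subset
  rw [Set.Finite.encard_eq_coe_toFinset_card hJfin,
    Set.encard_coe_eq_coe_finsetCard] at this
  have h3 : hJfin.toFinset.card = I.card := by exact_mod_cast this
  rw [Set.ncard_eq_toFinset_card']
  simpa [hIcard] using h3

lemma matRank_empty (M : Matroid α) : matRank M (∅ : Finset α) = 0 := by
  have := Basis'_ncard (M := M) (A := (∅ : Finset α)) (J := ∅)
  simp only [Set.ncard_empty] at this
  exact (this (by simp [M.empty_indep.isBasis_self.isBasis'])).symm

lemma matRank_mono {A B : Finset α} (h : A ⊆ B) : matRank M A ≤ matRank M B := by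
  obtain ⟨I, hIA, hI, hIcard⟩ := exists_matRank_basis' M A
  calc matRank M A = I.card := hIcard.symm
    _ ≤ matRank M B := card_le_matRank (hIA.trans h) hI.indep

lemma matRank_le_card (M : Matroid α) (A : Finset α) : matRank M A ≤ A.card := by
  obtain ⟨I, hIA, _, hIcard⟩ := exists_matRank_basis' M A
  rw [← hIcard]
  exact Finset.card_le_card hIA

lemma matRank_union_le {A B : Finset α} :
    matRank M (A ∪ B) ≤ matRank M A + (B \ A).card := by
  obtain ⟨I, hIA, hI, hIcard⟩ := exists_matRank_basis' M (A ∪ B)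
  rw [← hIcard]
  have : I = (I ∩ A) ∪ (I ∩ (B \ A)) := by
    ext x; simp only [Finset.mem_union, Finset.mem_inter, Finset.mem_sdiff]
    constructor
    · intro hx
      have := hIA hx
      simp only [Finset.mem_union] at this
      tauto
    · tauto
  rw [this, Finset.card_union_of_disjoint (by
    refine Finset.disjoint_left.mpr ?_
    simp only [Finset.mem_inter, Finset.mem_sdiff]; tauto)]
  have h1 : (I ∩ A).card ≤ matRank M A :=
    card_le_matRank Finset.inter_subset_right (hI.indep.subset (by simp))
  have h2 : (I ∩ (B \ A)).card ≤ (B \ A).card :=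
    Finset.card_le_card Finset.inter_subset_right
  omega

lemma matRank_subset_ground (M : Matroid α) (A : Finset α) :
    matRank M A = matRank M (A ∩ groundFinset M) := by
  obtain ⟨I, hIA, hI, hIcard⟩ := exists_matRank_basis' M A
  have hIE : ↑I ⊆ M.E := hI.indep.subset_ground
  have hsub : I ⊆ A ∩ groundFinset M := by
    intro x hx
    simp only [Finset.mem_inter]
    refine ⟨hIA hx, ?_⟩
    have := hIE hx
    simpa [groundFinset] using this
  refine le_antisymm ?_ (matRank_mono Finset.inter_subset_left)
  rw [← hIcard]
  exact card_le_matRank hsub hI.indep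


lemma mem_groundFinset {a : α} : a ∈ groundFinset M ↔ a ∈ M.E :=
  Set.Finite.mem_toFinset _

lemma groundFinset_coe (M : Matroid α) : (↑(groundFinset M) : Set α) = M.E :=
  Set.Finite.coe_toFinset _

lemma groundFinset_restrict (M : Matroid α) (S : Finset α) :
    groundFinset (M ↾ (↑S : Set α)) = S := by
  ext a
  simp [mem_groundFinset]

lemma groundFinset_dual (M : Matroid α) : groundFinset M✶ = groundFinset M := by
  ext a; simp [mem_groundFinset]

lemma groundFinset_mcontract (M : Matroid α) (C : Finset α) :
    groundFinset (mcontract M ↑C) = groundFinset M \ C := by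
  ext a
  simp [mem_groundFinset, mcontract, Matroid.restrict_ground_eq]

lemma matRank_restrict {S A : Finset α} (hAS : A ⊆ S) (M : Matroid α) :
    matRank (M ↾ (↑S : Set α)) A = matRank M A := by
  rw [matRank_def, matRank_def]
  congr 1
  apply Finset.filter_congr
  intro I hI
  simp only [Finset.mem_powerset] at hI
  simp only [Matroid.restrict_indep_iff, iff_self_and, and_iff_left_iff_imp]
  intro _
  exact_mod_cast hI.trans hAS

/-- The dual rank formula, in additive form. -/
lemma matRank_dual_add (M : Matroid α) {X : Finset α} (hX : X ⊆ groundFinset M) :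
    matRank M✶ X + matRank M (groundFinset M)
      = X.card + matRank M (groundFinset M \ X) := by
  set E := groundFinset M with hEdef
  have hE : (↑E : Set α) = M.E := groundFinset_coe M
  have hXE : (↑X : Set α) ⊆ M.E := by rw [← hE]; exact_mod_cast hX
  -- lower bound construction
  obtain ⟨I, hI⟩ := M.exists_isBasis' ↑(E \ X)
  obtain ⟨B, hB, hIB⟩ := hI.indep.exists_isBase_superset
  have hcoe : (↑(E \ X) : Set α) = ↑E \ ↑X := by push_cast; rfl
  have hBE : B ⊆ M.E := hB.subset_ground
  have hBdiff : I = B \ ↑X := by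
    refine hI.eq_of_subset_indep (hB.indep.subset Set.diff_subset) ?_ ?_
    · rw [Set.subset_diff]
      refine ⟨hIB, ?_⟩
      have := hI.subset
      rw [hcoe, Set.subset_diff] at this
      exact this.2
    · rw [hcoe]
      exact Set.diff_subset_diff_left (hE ▸ hBE)
  have hXBindep : M✶.Indep (↑X \ B) := by
    rw [Matroid.dual_indep_iff_exists (Set.diff_subset.trans hXE)]
    exact ⟨B, hB, Set.disjoint_sdiff_left⟩
  have hlow : (↑X \ B).ncard ≤ matRank M✶ X :=
    ncard_le_matRank Set.diff_subset hXBindep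
  have hBfin : B.Finite := Set.toFinite B
  have hBcard : B.ncard = matRank M E := by
    refine Basis'_ncard ?_
    rw [hE]
    exact hB.isBasis_ground.isBasis'
  have hIcard : I.ncard = matRank M (E \ X) := Basis'_ncard hI
  have hBsplit : (B ∩ ↑X).ncard + (B \ ↑X).ncard = B.ncard :=
    Set.ncard_inter_add_ncard_diff_eq_ncard B ↑X
  have hXsplit : ((↑X : Set α) ∩ B).ncard + ((↑X : Set α) \ B).ncard = X.card := by
    rw [Set.ncard_inter_add_ncard_diff_eq_ncard, Set.ncard_coe_finset]
  have hcomm : (↑X ∩ B : Set α).ncard = (B ∩ ↑X : Set α).ncard := by rw [Set.inter_comm]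
  have hIBcard : I.ncard = (B \ ↑X).ncard := by rw [hBdiff]
  -- upper bound
  obtain ⟨I', hI'X, hI'b, hI'card⟩ := exists_matRank_basis' M✶ X
  obtain ⟨B', hB', hdisj⟩ :=
    (Matroid.dual_indep_iff_exists (by exact_mod_cast (Finset.coe_subset.mpr hI'X).trans hXE)).mp
      hI'b.indep
  have hB'E : B' ⊆ M.E := hB'.subset_ground
  have hI'sub : (↑I' : Set α) ⊆ ↑X \ B' := by
    rw [Set.subset_diff]
    exact ⟨by exact_mod_cast hI'X, hdisj⟩
  have hI'le : I'.card ≤ (↑X \ B').ncard := by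
    have := Set.ncard_le_ncard hI'sub (Set.toFinite _)
    simpa [Set.ncard_coe_finset] using this
  have hB'diffle : (B' \ ↑X).ncard ≤ matRank M (E \ X) := by
    refine ncard_le_matRank ?_ (hB'.indep.subset Set.diff_subset)
    rw [hcoe]
    exact Set.diff_subset_diff_left (hE ▸ hB'E)
  have hB'card : B'.ncard = matRank M E := by
    refine Basis'_ncard ?_
    rw [hE]
    exact hB'.isBasis_ground.isBasis'
  have hB'split : (B' ∩ ↑X).ncard + (B' \ ↑X).ncard = B'.ncard :=
    Set.ncard_inter_add_ncard_diff_eq_ncard B' ↑X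
  have hX'split : ((↑X : Set α) ∩ B').ncard + ((↑X : Set α) \ B').ncard = X.card := by
    rw [Set.ncard_inter_add_ncard_diff_eq_ncard, Set.ncard_coe_finset]
  have hcomm' : (↑X ∩ B' : Set α).ncard = (B' ∩ ↑X : Set α).ncard := by rw [Set.inter_comm]
  omega

/-- The contraction rank formula, in additive form. -/
lemma matRank_mcontract_add (M : Matroid α) {C B : Finset α} (hC : C ⊆ groundFinset M)
    (hB : B ⊆ groundFinset M \ C) :
    matRank (mcontract M ↑C) B + matRank M C = matRank M (B ∪ C) := by
  set E := groundFinset M with hEdef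
  have hE : (↑E : Set α) = M.E := groundFinset_coe M
  have hsetC : M.E \ (↑C : Set α) = ↑(E \ C) := by rw [← hE]; push_cast; rfl
  set N := M✶ ↾ (M.E \ (↑C : Set α)) with hNdef
  have hmc : mcontract M ↑C = N✶ := rfl
  have hNground : groundFinset N = E \ C := by
    ext a
    simp [mem_groundFinset, hNdef, ← hE]
  have hrestr : ∀ Y : Finset α, Y ⊆ E \ C → matRank N Y = matRank M✶ Y := by
    intro Y hY
    rw [hNdef, hsetC]
    exact matRank_restrict hY M✶
  have hdualE : groundFinset M✶ = E := groundFinset_dual M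
  -- DRF for N at B
  have h1 : matRank N✶ B + matRank N (groundFinset N)
      = B.card + matRank N (groundFinset N \ B) := by
    refine matRank_dual_add N ?_
    rw [hNground]; exact hB
  rw [hNground] at h1
  rw [hrestr _ Finset.Subset.rfl, hrestr _ (Finset.sdiff_subset)] at h1
  -- DRF for M at E \ C
  have h2 : matRank M✶ (E \ C) + matRank M E = (E \ C).card + matRank M (E \ (E \ C)) :=
    matRank_dual_add M (X := E \ C) Finset.sdiff_subset
  have hEEC : E \ (E \ C) = C := by
    rw [Finset.sdiff_sdiff_self_left, Finset.inter_eq_right]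
    exact hC
  rw [hEEC] at h2
  -- DRF for M at (E \ C) \ B
  have h3 : matRank M✶ ((E \ C) \ B) + matRank M E
      = ((E \ C) \ B).card + matRank M (E \ ((E \ C) \ B)) := by
    exact matRank_dual_add M (X := (E \ C) \ B) (Finset.sdiff_subset.trans Finset.sdiff_subset)
  have hECB : E \ ((E \ C) \ B) = B ∪ C := by
    ext a
    simp only [Finset.mem_sdiff, Finset.mem_union, not_and, not_not]
    constructor
    · rintro ⟨haE, h⟩
      by_cases hc : a ∈ C
      · exact Or.inr hc
      · exact Or.inl (h ⟨haE, hc⟩)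
    · rintro (hb | hc)
      · have := hB hb
        simp only [Finset.mem_sdiff] at this
        exact ⟨this.1, fun _ => hb⟩
      · exact ⟨hC hc, fun h => absurd hc h.2⟩
  rw [hECB] at h3
  -- cardinalities
  have hc1 : (E \ C).card = E.card - C.card := Finset.card_sdiff_of_subset hC
  have hc2 : ((E \ C) \ B).card = (E \ C).card - B.card := Finset.card_sdiff_of_subset hB
  have hCle : C.card ≤ E.card := Finset.card_le_card hC
  have hBle : B.card ≤ (E \ C).card := Finset.card_le_card hB
  have hrkC : matRank M C ≤ C.card := matRank_le_card M C
  have hrkE : matRank M E ≥ matRank M (B ∪ C) := matRank_mono (by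
    intro a ha
    simp only [Finset.mem_union] at ha
    rcases ha with h | h
    · exact (Finset.mem_sdiff.mp (hB h)).1
    · exact hC h)
  rw [hmc]
  omega

lemma gPoly_congr {M N : Matroid α} (hg : groundFinset M = groundFinset N)
    (hr : ∀ A, A ⊆ groundFinset M → matRank M A = matRank N A) : gPoly M = gPoly N := by
  unfold gPoly
  rw [← hg]
  refine Finset.sum_congr rfl ?_
  intro A hA
  rw [Finset.mem_powerset] at hA
  rw [hr A hA, hr (groundFinset M) Finset.Subset.rfl, hg]

lemma gPoly_of_ground_empty {M : Matroid α} (h : groundFinset M = ∅) : gPoly M = 1 := by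
  unfold gPoly
  rw [h]
  simp [matRank_empty]

lemma gPoly_restrict_eq (M : Matroid α) (S : Finset α) :
    gPoly (M ↾ (↑S : Set α)) = ∑ A ∈ S.powerset,
      (X 0 - X 2) ^ (matRank M S - matRank M A) *
      (X 1 + X 2) ^ (matRank M A) *
      (X 1 - X 3) ^ (A.card - matRank M A) *
      (X 0 + X 3) ^ ((S.card - A.card) - (matRank M S - matRank M A)) := by
  unfold gPoly
  rw [groundFinset_restrict]
  refine Finset.sum_congr rfl ?_
  intro A hA
  rw [Finset.mem_powerset] at hA
  rw [matRank_restrict hA, matRank_restrict Finset.Subset.rfl]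

/-- Deletion-contraction for `gPoly`. -/
lemma gPoly_dc (M : Matroid α) {f : α} (hf : f ∈ groundFinset M) :
    gPoly M =
      (X 0 - X 2) ^ (matRank M (groundFinset M) - matRank M ((groundFinset M).erase f)) *
        (X 0 + X 3) ^ (1 - (matRank M (groundFinset M) - matRank M ((groundFinset M).erase f))) *
        gPoly (M ↾ (↑((groundFinset M).erase f) : Set α)) +
      (X 1 + X 2) ^ (matRank M {f}) * (X 1 - X 3) ^ (1 - matRank M {f}) *
        gPoly (mcontract M (↑({f} : Finset α) : Set α)) := by
  classical
  set E := groundFinset M with hEdef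
  set E' := E.erase f with hE'def
  have hfE' : f ∉ E' := Finset.notMem_erase f E
  have hEfE' : E = insert f E' := (Finset.insert_erase hf).symm
  have hE'card : E'.card + 1 = E.card := by
    rw [hEfE', Finset.card_insert_of_notMem hfE']
  set r := matRank M E with hrdef
  set r' := matRank M E' with hr'def
  have hr'r : r' ≤ r := matRank_mono (Finset.erase_subset f E)
  have hrr' : r ≤ r' + 1 := by
    have h1 : matRank M (E' ∪ {f}) ≤ matRank M E' + ({f} \ E').card :=
      matRank_union_le
    have h2 : E' ∪ {f} = E := by
      rw [hEfE']; ext a; simp [or_comm]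
    have h3 : ({f} \ E').card ≤ 1 :=
      le_trans (Finset.card_le_card Finset.sdiff_subset) (by simp)
    rw [h2] at h1
    omega
  set δ := matRank M ({f} : Finset α) with hδdef
  have hδ1 : δ ≤ 1 := by
    have := matRank_le_card M ({f} : Finset α)
    simpa using this
  have hfsub : ({f} : Finset α) ⊆ E := by simpa [mem_groundFinset] using hf
  set Mc := mcontract M (↑({f} : Finset α) : Set α) with hMcdef
  have hMcground : groundFinset Mc = E \ {f} := groundFinset_mcontract M {f}
  have hEf : E \ {f} = E' := (Finset.erase_eq E f).symm
  have hrc : matRank Mc E' + δ = r := by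
    have h := matRank_mcontract_add M (C := {f}) (B := E \ {f}) hfsub Finset.Subset.rfl
    have h2 : (E \ {f}) ∪ {f} = E := by
      ext a
      simp only [Finset.mem_union, Finset.mem_sdiff, Finset.mem_singleton]
      constructor
      · rintro (⟨h, _⟩ | rfl)
        · exact h
        · exact hf
      · intro haE
        by_cases h : a = f
        · exact Or.inr h
        · exact Or.inl ⟨haE, h⟩
    rw [h2, hEf] at h
    exact h
  have h0 : gPoly M = ∑ A ∈ (insert f E').powerset,
      ((X 0 - X 2) ^ (r - matRank M A) * (X 1 + X 2) ^ (matRank M A) *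
      (X 1 - X 3) ^ (A.card - matRank M A) *
      (X 0 + X 3) ^ ((E.card - A.card) - (r - matRank M A))) := by
    rw [← hEfE']
    rfl
  rw [Finset.sum_powerset_insert hfE'] at h0
  have hD : (∑ A ∈ E'.powerset,
      ((X 0 - X 2) ^ (r - matRank M A) * (X 1 + X 2) ^ (matRank M A) *
      (X 1 - X 3) ^ (A.card - matRank M A) *
      (X 0 + X 3) ^ ((E.card - A.card) - (r - matRank M A))))
      = (X 0 - X 2) ^ (r - r') * (X 0 + X 3) ^ (1 - (r - r')) *
        gPoly (M ↾ (↑E' : Set α)) := by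
    rw [gPoly_restrict_eq, Finset.mul_sum]
    refine Finset.sum_congr rfl ?_
    intro A hA
    rw [Finset.mem_powerset] at hA
    have ha1 : matRank M A ≤ r' := matRank_mono hA
    have ha2 : r' ≤ matRank M A + (E' \ A).card := by
      have := matRank_union_le (M := M) (A := A) (B := E')
      rwa [Finset.union_eq_right.mpr hA] at this
    have ha3 : (E' \ A).card = E'.card - A.card := Finset.card_sdiff_of_subset hA
    have ha4 : A.card ≤ E'.card := Finset.card_le_card hA
    rw [show r - matRank M A = (r - r') + (r' - matRank M A) by omega,
      show (E.card - A.card) - ((r - r') + (r' - matRank M A))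
        = (1 - (r - r')) + ((E'.card - A.card) - (r' - matRank M A)) by omega,
      pow_add, pow_add]
    ring
  have hMc0 : gPoly Mc = ∑ A ∈ E'.powerset,
      ((X 0 - X 2) ^ (matRank Mc E' - matRank Mc A) * (X 1 + X 2) ^ (matRank Mc A) *
      (X 1 - X 3) ^ (A.card - matRank Mc A) *
      (X 0 + X 3) ^ ((E'.card - A.card) - (matRank Mc E' - matRank Mc A))) := by
    unfold gPoly
    rw [hMcground, hEf]
  have hC : (∑ A ∈ E'.powerset,
      ((X 0 - X 2) ^ (r - matRank M (insert f A)) * (X 1 + X 2) ^ (matRank M (insert f A)) *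
      (X 1 - X 3) ^ ((insert f A).card - matRank M (insert f A)) *
      (X 0 + X 3) ^ ((E.card - (insert f A).card) - (r - matRank M (insert f A)))))
      = (X 1 + X 2) ^ δ * (X 1 - X 3) ^ (1 - δ) * gPoly Mc := by
    rw [hMc0, Finset.mul_sum]
    refine Finset.sum_congr rfl ?_
    intro A hA
    rw [Finset.mem_powerset] at hA
    have hAf : f ∉ A := fun h => hfE' (hA h)
    have hb : matRank Mc A + δ = matRank M (A ∪ {f}) :=
      matRank_mcontract_add M hfsub (hEf ▸ hA)
    have hins : A ∪ {f} = insert f A := by ext a; simp [or_comm]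
    rw [hins] at hb
    have hbA : matRank Mc A ≤ A.card := matRank_le_card Mc A
    have hbrc : matRank Mc A ≤ matRank Mc E' := matRank_mono hA
    have hcard : (insert f A).card = A.card + 1 := Finset.card_insert_of_notMem hAf
    have ha4 : A.card ≤ E'.card := Finset.card_le_card hA
    have hrcE : matRank Mc E' ≤ E'.card := matRank_le_card Mc E'
    rw [show matRank M (insert f A) = δ + matRank Mc A by omega]
    rw [hcard]
    rw [show r - (δ + matRank Mc A) = matRank Mc E' - matRank Mc A by omega,
      show A.card + 1 - (δ + matRank Mc A) = (1 - δ) + (A.card - matRank Mc A) by omega,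
      show (E.card - (A.card + 1)) - (matRank Mc E' - matRank Mc A)
        = (E'.card - A.card) - (matRank Mc E' - matRank Mc A) by omega,
      pow_add, pow_add]
    ring
  rw [h0, hD, hC]

@[simp] lemma subX0_X0 : subX0 (X 0 : MvPolynomial (Fin 4) ℤ) = 0 := by simp [subX0]
@[simp] lemma subX0_X1 : subX0 (X 1 : MvPolynomial (Fin 4) ℤ) = X 1 := by simp [subX0]
@[simp] lemma subX0_X2 : subX0 (X 2 : MvPolynomial (Fin 4) ℤ) = X 2 := by simp [subX0]
@[simp] lemma subX0_X3 : subX0 (X 3 : MvPolynomial (Fin 4) ℤ) = X 3 := by simp [subX0]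
@[simp] lemma subY0_X0 : subY0 (X 0 : MvPolynomial (Fin 4) ℤ) = X 0 := by simp [subY0]
@[simp] lemma subY0_X1 : subY0 (X 1 : MvPolynomial (Fin 4) ℤ) = 0 := by simp [subY0]
@[simp] lemma subY0_X2 : subY0 (X 2 : MvPolynomial (Fin 4) ℤ) = X 2 := by simp [subY0]
@[simp] lemma subY0_X3 : subY0 (X 3 : MvPolynomial (Fin 4) ℤ) = X 3 := by simp [subY0]

lemma cancel_pow {a : ℕ} (ha : a ≤ 1) :
    (X 2 : MvPolynomial (Fin 4) ℤ) ^ a * (-(X 3)) ^ (1 - a)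
      + (-(X 2)) ^ a * (X 3) ^ (1 - a) = 0 := by
  interval_cases a <;> simp

section minors

variable {f : α} {S : Finset α} (M : Matroid α)

lemma gPoly_restrict_restrict {T : Finset α} (hST : S ⊆ T) :
    gPoly (M ↾ (↑S : Set α)) = gPoly ((M ↾ (↑T : Set α)) ↾ (↑S : Set α)) := by
  refine gPoly_congr ?_ ?_
  · rw [groundFinset_restrict, groundFinset_restrict]
  · intro A hA
    rw [groundFinset_restrict] at hA
    rw [matRank_restrict hA, matRank_restrict hA, matRank_restrict (hA.trans hST)]

variable (hf : f ∈ groundFinset M) (hSE : S ⊆ groundFinset M) (hfS : f ∉ S)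

include hf hSE hfS in
lemma gPoly_contract_delete :
    gPoly ((mcontract M (↑S : Set α)) ↾
        (↑((groundFinset M \ S).erase f) : Set α))
      = gPoly (mcontract (M ↾ (↑((groundFinset M).erase f) : Set α)) (↑S : Set α)) := by
  classical
  set E := groundFinset M with hEdef
  have hground : groundFinset (M ↾ (↑(E.erase f) : Set α)) = E.erase f :=
    groundFinset_restrict _ _
  have hSE' : S ⊆ E.erase f := fun a ha => Finset.mem_erase.mpr ⟨fun h => hfS (h ▸ ha), hSE ha⟩
  refine gPoly_congr ?_ ?_
  · rw [groundFinset_restrict, groundFinset_mcontract, hground]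
    ext a; simp only [Finset.mem_erase, Finset.mem_sdiff]; tauto
  · intro A hA
    rw [groundFinset_restrict] at hA
    rw [matRank_restrict hA]
    have hA1 : A ⊆ E \ S := hA.trans (Finset.erase_subset _ _)
    have hA2 : A ⊆ E.erase f \ S := by
      intro a ha
      have := hA ha
      simp only [Finset.mem_erase, Finset.mem_sdiff] at this ⊢
      tauto
    have h1 := matRank_mcontract_add M hSE hA1
    have h2 := matRank_mcontract_add (M ↾ (↑(E.erase f) : Set α))
      (C := S) (B := A) (by rw [hground]; exact hSE') (by rw [hground]; exact hA2)
    rw [matRank_restrict (show A ∪ S ⊆ E.erase f from Finset.union_subset (hA2.trans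
      Finset.sdiff_subset) hSE'), matRank_restrict hSE'] at h2
    have h3 : matRank M S ≤ matRank M (A ∪ S) := matRank_mono Finset.subset_union_right
    omega

include hf hSE hfS in
lemma gPoly_contract_contract :
    gPoly (mcontract (mcontract M (↑S : Set α)) (↑({f} : Finset α) : Set α))
      = gPoly (mcontract M (↑(insert f S) : Set α)) := by
  classical
  set E := groundFinset M with hEdef
  have hNg : groundFinset (mcontract M (↑S : Set α)) = E \ S := groundFinset_mcontract M S
  have hins : insert f S ⊆ E := Finset.insert_subset hf hSE
  have hfES : ({f} : Finset α) ⊆ E \ S := by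
    simp only [Finset.singleton_subset_iff, Finset.mem_sdiff]
    exact ⟨hf, hfS⟩
  refine gPoly_congr ?_ ?_
  · ext a
    simp only [mem_groundFinset, mcontract, Matroid.restrict_ground_eq,
      Matroid.dual_ground, Set.mem_diff, Finset.coe_insert, Set.mem_insert_iff,
      Finset.coe_singleton, Set.mem_singleton_iff, Finset.mem_coe]
    tauto
  · intro A hA
    have hA1 : A ⊆ (E \ S) \ {f} := by
      rwa [groundFinset_mcontract, hNg] at hA
    have hA2 : A ⊆ E \ insert f S := by
      intro a ha
      have := hA1 ha
      simp only [Finset.mem_sdiff, Finset.mem_singleton, Finset.mem_insert] at this ⊢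
      tauto
    have hAfsub : A ∪ {f} ⊆ E \ S :=
      Finset.union_subset (hA1.trans Finset.sdiff_subset) hfES
    have h1 := matRank_mcontract_add (mcontract M (↑S : Set α)) (C := {f}) (B := A)
      (by rw [hNg]; exact hfES) (by rw [hNg]; exact hA1)
    have h2 := matRank_mcontract_add M (C := S) (B := A ∪ {f}) hSE hAfsub
    have h3 := matRank_mcontract_add M (C := S) (B := ({f} : Finset α)) hSE hfES
    have h4 := matRank_mcontract_add M (C := insert f S) (B := A) hins hA2
    have hu1 : (A ∪ {f}) ∪ S = A ∪ insert f S := by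
      ext a
      simp only [Finset.mem_union, Finset.mem_singleton, Finset.mem_insert]
      tauto
    have hu2 : ({f} : Finset α) ∪ S = insert f S := by
      ext a
      simp only [Finset.mem_union, Finset.mem_singleton, Finset.mem_insert]
    rw [hu1] at h2
    rw [hu2] at h3
    omega

include hf hSE hfS in
lemma gPoly_contract_comm :
    gPoly (mcontract M (↑(insert f S) : Set α))
      = gPoly (mcontract (mcontract M (↑({f} : Finset α) : Set α)) (↑S : Set α)) := by
  classical
  set E := groundFinset M with hEdef
  have hMcg : groundFinset (mcontract M (↑({f} : Finset α) : Set α)) = E \ {f} :=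
    groundFinset_mcontract M {f}
  have hins : insert f S ⊆ E := Finset.insert_subset hf hSE
  have hfsub : ({f} : Finset α) ⊆ E := by simpa using hf
  have hSEf : S ⊆ E \ {f} := by
    intro a ha
    simp only [Finset.mem_sdiff, Finset.mem_singleton]
    exact ⟨hSE ha, fun h => hfS (h ▸ ha)⟩
  refine gPoly_congr ?_ ?_
  · ext a
    simp only [mem_groundFinset, mcontract, Matroid.restrict_ground_eq,
      Matroid.dual_ground, Set.mem_diff, Finset.coe_insert, Set.mem_insert_iff,
      Finset.coe_singleton, Set.mem_singleton_iff, Finset.mem_coe]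
    tauto
  · intro A hA
    have hA : A ⊆ E \ insert f S := by rwa [groundFinset_mcontract] at hA
    have hA2 : A ⊆ (E \ {f}) \ S := by
      intro a ha
      have := hA ha
      simp only [Finset.mem_sdiff, Finset.mem_singleton, Finset.mem_insert] at this ⊢
      tauto
    have hASsub : A ∪ S ⊆ E \ {f} :=
      Finset.union_subset (hA2.trans Finset.sdiff_subset) hSEf
    have h1 := matRank_mcontract_add M (C := insert f S) (B := A) hins hA
    have h2 := matRank_mcontract_add (mcontract M (↑({f} : Finset α) : Set α))
      (C := S) (B := A) (by rw [hMcg]; exact hSEf) (by rw [hMcg]; exact hA2)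
    have h3 := matRank_mcontract_add M (C := {f}) (B := A ∪ S) hfsub hASsub
    have h4 := matRank_mcontract_add M (C := {f}) (B := S) hfsub hSEf
    have hu1 : (A ∪ S) ∪ {f} = A ∪ insert f S := by
      ext a
      simp only [Finset.mem_union, Finset.mem_singleton, Finset.mem_insert]
      tauto
    have hu2 : S ∪ ({f} : Finset α) = insert f S := by
      ext a
      simp only [Finset.mem_union, Finset.mem_singleton, Finset.mem_insert]
      tauto
    rw [hu1] at h3
    rw [hu2] at h4
    omega

include hf hSE hfS in
lemma gPoly_restrictIns_contract :
    gPoly (mcontract (M ↾ (↑(insert f S) : Set α)) (↑({f} : Finset α) : Set α))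
      = gPoly ((mcontract M (↑({f} : Finset α) : Set α)) ↾ (↑S : Set α)) := by
  classical
  set E := groundFinset M with hEdef
  have hN2g : groundFinset (M ↾ (↑(insert f S) : Set α)) = insert f S :=
    groundFinset_restrict _ _
  have hfsub : ({f} : Finset α) ⊆ E := by simpa using hf
  have hSEf : S ⊆ E \ {f} := by
    intro a ha
    simp only [Finset.mem_sdiff, Finset.mem_singleton]
    exact ⟨hSE ha, fun h => hfS (h ▸ ha)⟩
  refine gPoly_congr ?_ ?_
  · ext a
    simp only [mem_groundFinset, mcontract, Matroid.restrict_ground_eq,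
      Matroid.dual_ground, Set.mem_diff, Finset.coe_insert, Set.mem_insert_iff,
      Finset.coe_singleton, Set.mem_singleton_iff, Finset.mem_coe]
    constructor
    · rintro ⟨h | h, hne⟩
      · exact absurd h hne
      · exact h
    · intro h
      exact ⟨Or.inr h, fun he => hfS (he ▸ h)⟩
  · intro A hA
    have hA : A ⊆ insert f S \ {f} := by
      rwa [groundFinset_mcontract, hN2g] at hA
    have hAS : A ⊆ S := by
      intro a ha
      have := hA ha
      simp only [Finset.mem_sdiff, Finset.mem_singleton, Finset.mem_insert] at this
      tauto
    have hAf : A ⊆ insert f S \ {f} := hA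
    have h1 := matRank_mcontract_add (M ↾ (↑(insert f S) : Set α)) (C := {f}) (B := A)
      (by rw [hN2g]; simp) (by rw [hN2g]; exact hAf)
    rw [matRank_restrict (show A ∪ {f} ⊆ insert f S by
        intro a ha
        simp only [Finset.mem_union, Finset.mem_singleton] at ha
        rcases ha with h | rfl
        · exact Finset.mem_insert_of_mem (hAS h)
        · exact Finset.mem_insert_self _ _),
      matRank_restrict (show ({f} : Finset α) ⊆ insert f S by simp)] at h1
    have h2 := matRank_mcontract_add M (C := {f}) (B := A) hfsub (hAS.trans hSEf)
    rw [matRank_restrict hAS]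
    omega

end minors

section coef

variable {f : α} {S : Finset α} (M : Matroid α)

lemma rank_contract_ground_coef (hf : f ∈ groundFinset M)
    (hSE' : S ⊆ (groundFinset M).erase f) :
    matRank (mcontract M (↑S : Set α)) (groundFinset M \ S)
        - matRank (mcontract M (↑S : Set α)) ((groundFinset M \ S).erase f)
      = matRank M (groundFinset M) - matRank M ((groundFinset M).erase f) := by
  classical
  have hSE : S ⊆ groundFinset M := hSE'.trans (Finset.erase_subset f _)
  have k1 := matRank_mcontract_add M (C := S) (B := groundFinset M \ S) hSE
    Finset.Subset.rfl
  have k2 := matRank_mcontract_add M (C := S) (B := (groundFinset M \ S).erase f) hSE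
    (Finset.erase_subset f _)
  have hu1 : (groundFinset M \ S) ∪ S = groundFinset M := by
    ext a
    simp only [Finset.mem_union, Finset.mem_sdiff]
    constructor
    · rintro (⟨h, _⟩ | h)
      · exact h
      · exact hSE h
    · intro h
      by_cases hs : a ∈ S
      · exact Or.inr hs
      · exact Or.inl ⟨h, hs⟩
  have hu2 : ((groundFinset M \ S).erase f) ∪ S = (groundFinset M).erase f := by
    ext a
    simp only [Finset.mem_union, Finset.mem_erase, Finset.mem_sdiff]
    constructor
    · rintro (⟨hne, h, _⟩ | h)
      · exact ⟨hne, h⟩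
      · have := hSE' h
        rw [Finset.mem_erase] at this
        exact this
    · rintro ⟨hne, h⟩
      by_cases hs : a ∈ S
      · exact Or.inr hs
      · exact Or.inl ⟨hne, h, hs⟩
  rw [hu1] at k1
  rw [hu2] at k2
  have m1 : matRank (mcontract M (↑S : Set α)) ((groundFinset M \ S).erase f)
      ≤ matRank (mcontract M (↑S : Set α)) (groundFinset M \ S) :=
    matRank_mono (Finset.erase_subset f _)
  have m2 : matRank M ((groundFinset M).erase f) ≤ matRank M (groundFinset M) :=
    matRank_mono (Finset.erase_subset f _)
  omega

lemma rank_contract_f (hf : f ∈ groundFinset M)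
    (hSE' : S ⊆ (groundFinset M).erase f) :
    matRank (mcontract M (↑S : Set α)) {f}
      = matRank M (insert f S) - matRank M S := by
  classical
  have hSE : S ⊆ groundFinset M := hSE'.trans (Finset.erase_subset f _)
  have hfS : f ∉ S := fun h => (Finset.mem_erase.mp (hSE' h)).1 rfl
  have k := matRank_mcontract_add M (C := S) (B := ({f} : Finset α)) hSE
    (by simp only [Finset.singleton_subset_iff, Finset.mem_sdiff]; exact ⟨hf, hfS⟩)
  have hu : ({f} : Finset α) ∪ S = insert f S := by
    ext a; simp only [Finset.mem_union, Finset.mem_singleton, Finset.mem_insert]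
  rw [hu] at k
  have m : matRank M S ≤ matRank M (insert f S) :=
    matRank_mono (Finset.subset_insert f S)
  omega

lemma rank_insert_le (hf : f ∈ groundFinset M) (hSE' : S ⊆ (groundFinset M).erase f) :
    matRank M (insert f S) ≤ matRank M S + 1 := by
  have h := matRank_union_le (M := M) (A := S) (B := ({f} : Finset α))
  have hu : S ∪ ({f} : Finset α) = insert f S := by
    ext a; simp only [Finset.mem_union, Finset.mem_singleton, Finset.mem_insert]; tauto
  rw [hu] at h
  have : (({f} : Finset α) \ S).card ≤ 1 :=
    le_trans (Finset.card_le_card Finset.sdiff_subset) (by simp)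
  omega

lemma key_step (hf : f ∈ groundFinset M) (hSE' : S ⊆ (groundFinset M).erase f) :
    subX0 (gPoly (M ↾ (↑S : Set α))) * subY0 (gPoly (mcontract M (↑S : Set α)))
      + subX0 (gPoly (M ↾ (↑(insert f S) : Set α)))
        * subY0 (gPoly (mcontract M (↑(insert f S) : Set α)))
    = (X 0 - X 2) ^ (matRank M (groundFinset M) - matRank M ((groundFinset M).erase f)) *
        (X 0 + X 3) ^ (1 - (matRank M (groundFinset M) - matRank M ((groundFinset M).erase f))) *
        (subX0 (gPoly ((M ↾ (↑((groundFinset M).erase f) : Set α)) ↾ (↑S : Set α)))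
          * subY0 (gPoly (mcontract (M ↾ (↑((groundFinset M).erase f) : Set α)) (↑S : Set α))))
      + (X 1 + X 2) ^ (matRank M ({f} : Finset α)) *
          (X 1 - X 3) ^ (1 - matRank M ({f} : Finset α)) *
        (subX0 (gPoly ((mcontract M (↑({f} : Finset α) : Set α)) ↾ (↑S : Set α)))
          * subY0 (gPoly (mcontract (mcontract M (↑({f} : Finset α) : Set α)) (↑S : Set α)))) := by
  classical
  have hSE : S ⊆ groundFinset M := hSE'.trans (Finset.erase_subset f _)
  have hfS : f ∉ S := fun h => (Finset.mem_erase.mp (hSE' h)).1 rfl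
  -- DC for the contraction M/S at f
  have hfN1 : f ∈ groundFinset (mcontract M (↑S : Set α)) := by
    rw [groundFinset_mcontract]
    simp only [Finset.mem_sdiff]
    exact ⟨hf, hfS⟩
  have hdc1 := gPoly_dc (mcontract M (↑S : Set α)) hfN1
  rw [groundFinset_mcontract M S] at hdc1
  rw [rank_contract_ground_coef M hf hSE', rank_contract_f M hf hSE',
    gPoly_contract_delete M hf hSE hfS, gPoly_contract_contract M hf hSE hfS] at hdc1
  -- DC for the restriction M|(S∪f) at f
  have hfN2 : f ∈ groundFinset (M ↾ (↑(insert f S) : Set α)) := by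
    rw [groundFinset_restrict]
    exact Finset.mem_insert_self f S
  have hdc2 := gPoly_dc (M ↾ (↑(insert f S) : Set α)) hfN2
  rw [groundFinset_restrict] at hdc2
  rw [Finset.erase_insert hfS] at hdc2
  rw [matRank_restrict (Finset.Subset.refl (insert f S)) M,
    matRank_restrict (Finset.subset_insert f S) M,
    matRank_restrict (Finset.singleton_subset_iff.mpr (Finset.mem_insert_self f S)) M]
    at hdc2
  rw [← gPoly_restrict_restrict M (Finset.subset_insert f S),
    gPoly_restrictIns_contract M hf hSE hfS] at hdc2
  -- map through the substitutions
  have A1 := congrArg (fun p => subY0 p) hdc1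
  simp only [map_add, map_mul, map_pow, map_sub, subY0_X0, subY0_X1, subY0_X2, subY0_X3,
    zero_add, zero_sub] at A1
  have A2 := congrArg (fun p => subX0 p) hdc2
  simp only [map_add, map_mul, map_pow, map_sub, subX0_X0, subX0_X1, subX0_X2, subX0_X3,
    zero_add, zero_sub] at A2
  have A3 := congrArg (fun p => subX0 p)
    (gPoly_restrict_restrict M (S := S) (T := (groundFinset M).erase f) hSE')
  have A4 := congrArg (fun p => subY0 p) (gPoly_contract_comm M hf hSE hfS)
  have hd1 : matRank M (insert f S) ≤ matRank M S + 1 := rank_insert_le M hf hSE'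
  have hd0 : matRank M S ≤ matRank M (insert f S) :=
    matRank_mono (Finset.subset_insert f S)
  rcases (by omega : matRank M (insert f S) - matRank M S = 0
      ∨ matRank M (insert f S) - matRank M S = 1) with h | h <;>
    rw [h] at A1 A2 <;>
    simp only [pow_zero, pow_one, Nat.sub_zero, Nat.sub_self, one_mul, mul_one] at A1 A2 <;>
    rw [A1, A2, A3, A4] <;>
    ring

end coef

lemma key : ∀ (n : ℕ) (M : Matroid α) (e : α), (groundFinset M).card ≤ n →
    e ∈ groundFinset M →
    X 1 * gPoly M = (X 0 + X 1) *
      ∑ S ∈ (groundFinset M).powerset.filter (fun S => e ∈ S),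
        subX0 (gPoly (M ↾ (↑S : Set α))) * subY0 (gPoly (mcontract M (↑S : Set α))) := by
  classical
  intro n
  induction n with
  | zero =>
    intro M e hc he
    exact absurd (Finset.card_pos.mpr ⟨e, he⟩) (by omega)
  | succ n ih =>
    intro M e hcard he
    by_cases h1 : (groundFinset M).card ≤ 1
    · -- base case : ground set is {e}
      have hE : groundFinset M = {e} := by
        have hpos : 1 ≤ (groundFinset M).card := Finset.card_pos.mpr ⟨e, he⟩
        have h2 : (groundFinset M).card = 1 := by omega
        obtain ⟨a, ha⟩ := Finset.card_eq_one.mp h2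
        rw [ha] at he ⊢
        simp only [Finset.mem_singleton] at he
        rw [he]
      have hfilt : (groundFinset M).powerset.filter (fun S => e ∈ S)
          = {({e} : Finset α)} := by
        rw [hE]
        ext S
        simp only [Finset.mem_filter, Finset.mem_powerset, Finset.mem_singleton,
          Finset.subset_singleton_iff]
        constructor
        · rintro ⟨h | rfl, hme⟩
          · subst h; simp at hme
          · rfl
        · rintro rfl
          simp
      rw [hfilt, Finset.sum_singleton]
      have hrestr : M ↾ ((↑({e} : Finset α)) : Set α) = M := by
        have h : ((↑({e} : Finset α)) : Set α) = M.E := by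
          rw [← groundFinset_coe M, hE]
        rw [h, Matroid.restrict_ground_eq_self]
      have hcontr : gPoly (mcontract M ((↑({e} : Finset α)) : Set α)) = 1 := by
        apply gPoly_of_ground_empty
        rw [groundFinset_mcontract, hE]
        simp
      rw [hrestr, hcontr, map_one, mul_one]
      have hδ : matRank M ({e} : Finset α) ≤ 1 := by
        have := matRank_le_card M ({e} : Finset α)
        simpa using this
      rcases (by omega : matRank M ({e} : Finset α) = 0 ∨ matRank M ({e} : Finset α) = 1)
        with h | h
      · have hg : gPoly M = (X 0 + X 3) + (X 1 - X 3) := by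
          unfold gPoly
          rw [hE, show ({e} : Finset α) = insert e ∅ from (Finset.insert_empty).symm,
            Finset.sum_powerset_insert (Finset.notMem_empty e), Finset.powerset_empty,
            Finset.sum_singleton, Finset.sum_singleton, Finset.insert_empty,
            matRank_empty, h]
          simp
        rw [hg]
        simp only [map_add, map_sub, subX0_X0, subX0_X1, subX0_X3, zero_add, zero_sub]
        ring
      · have hg : gPoly M = (X 0 - X 2) + (X 1 + X 2) := by
          unfold gPoly
          rw [hE, show ({e} : Finset α) = insert e ∅ from (Finset.insert_empty).symm,
            Finset.sum_powerset_insert (Finset.notMem_empty e), Finset.powerset_empty,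
            Finset.sum_singleton, Finset.sum_singleton, Finset.insert_empty,
            matRank_empty, h]
          simp
        rw [hg]
        simp only [map_add, map_sub, subX0_X0, subX0_X1, subX0_X2, zero_add, zero_sub]
        ring
    · -- inductive step
      push_neg at h1
      obtain ⟨f, hf, hfe⟩ := Finset.exists_mem_ne h1 e
      have hef : e ≠ f := Ne.symm hfe
      have he' : e ∈ (groundFinset M).erase f := Finset.mem_erase.mpr ⟨hef, he⟩
      have hfE' : f ∉ (groundFinset M).erase f := Finset.notMem_erase f _
      have hMdg : groundFinset (M ↾ (↑((groundFinset M).erase f) : Set α))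
          = (groundFinset M).erase f := groundFinset_restrict _ _
      have hMcg : groundFinset (mcontract M (↑({f} : Finset α) : Set α))
          = (groundFinset M).erase f := by
        rw [groundFinset_mcontract, ← Finset.erase_eq]
      have hcard' : ((groundFinset M).erase f).card ≤ n := by
        rw [Finset.card_erase_of_mem hf]
        omega
      have ihd := ih (M ↾ (↑((groundFinset M).erase f) : Set α)) e
        (by rw [hMdg]; exact hcard') (by rw [hMdg]; exact he')
      have ihc := ih (mcontract M (↑({f} : Finset α) : Set α)) e
        (by rw [hMcg]; exact hcard') (by rw [hMcg]; exact he')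
      rw [hMdg] at ihd
      rw [hMcg] at ihc
      have hsplit : ∑ S ∈ (groundFinset M).powerset.filter (fun S => e ∈ S),
            subX0 (gPoly (M ↾ (↑S : Set α))) * subY0 (gPoly (mcontract M (↑S : Set α)))
          = ∑ S ∈ ((groundFinset M).erase f).powerset.filter (fun S => e ∈ S),
            (subX0 (gPoly (M ↾ (↑S : Set α))) * subY0 (gPoly (mcontract M (↑S : Set α)))
            + subX0 (gPoly (M ↾ (↑(insert f S) : Set α)))
              * subY0 (gPoly (mcontract M (↑(insert f S) : Set α)))) := by
        rw [Finset.sum_filter, Finset.sum_filter]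
        conv_lhs => rw [show groundFinset M = insert f ((groundFinset M).erase f) from
          (Finset.insert_erase hf).symm]
        rw [Finset.sum_powerset_insert hfE']
        rw [← Finset.sum_add_distrib]
        refine Finset.sum_congr rfl fun S hS => ?_
        by_cases hc : e ∈ S <;> simp [Finset.mem_insert, hc, hef]
      rw [hsplit]
      have hsum2 : ∑ S ∈ ((groundFinset M).erase f).powerset.filter (fun S => e ∈ S),
            (subX0 (gPoly (M ↾ (↑S : Set α))) * subY0 (gPoly (mcontract M (↑S : Set α)))
            + subX0 (gPoly (M ↾ (↑(insert f S) : Set α)))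
              * subY0 (gPoly (mcontract M (↑(insert f S) : Set α))))
          = ∑ S ∈ ((groundFinset M).erase f).powerset.filter (fun S => e ∈ S),
            ((X 0 - X 2) ^ (matRank M (groundFinset M)
                - matRank M ((groundFinset M).erase f)) *
              (X 0 + X 3) ^ (1 - (matRank M (groundFinset M)
                - matRank M ((groundFinset M).erase f))) *
              (subX0 (gPoly ((M ↾ (↑((groundFinset M).erase f) : Set α)) ↾ (↑S : Set α)))
                * subY0 (gPoly (mcontract (M ↾ (↑((groundFinset M).erase f) : Set α))
                    (↑S : Set α))))
            + (X 1 + X 2) ^ (matRank M ({f} : Finset α)) *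
                (X 1 - X 3) ^ (1 - matRank M ({f} : Finset α)) *
              (subX0 (gPoly ((mcontract M (↑({f} : Finset α) : Set α)) ↾ (↑S : Set α)))
                * subY0 (gPoly (mcontract (mcontract M (↑({f} : Finset α) : Set α))
                    (↑S : Set α))))) := by
        refine Finset.sum_congr rfl fun S hS => ?_
        simp only [Finset.mem_filter, Finset.mem_powerset] at hS
        exact key_step M hf hS.1
      rw [hsum2, Finset.sum_add_distrib, ← Finset.mul_sum, ← Finset.mul_sum]
      rw [gPoly_dc M hf]
      linear_combination
        ((X 0 - X 2) ^ (matRank M (groundFinset M) - matRank M ((groundFinset M).erase f)) *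
          (X 0 + X 3) ^ (1 - (matRank M (groundFinset M)
            - matRank M ((groundFinset M).erase f)))) * ihd
        + ((X 1 + X 2) ^ (matRank M ({f} : Finset α)) *
            (X 1 - X 3) ^ (1 - matRank M ({f} : Finset α))) * ihc

end MyTutte

open MyTutte

/-- The recursion `t_M(x,y,z,w) = t_M(0,y,z,w) +
x · ∑_{e ∈ S ⊊ E} t_{M|S}(0,y,z,w) · t_{M/S}(x,0,z,w)`, where `t_N` denotes the quotient of
`g_N` by `x + y`. -/
theorem stmt3 [Fintype α] (M : Matroid α) (e : α) (he : e ∈ M.E)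
    (t : MvPolynomial (Fin 4) ℤ) (ht : (X 0 + X 1) * t = gPoly M)
    (tR tC : Finset α → MvPolynomial (Fin 4) ℤ)
    (htR : ∀ S ∈ propSubsetsContaining M e,
      (X 0 + X 1) * tR S = gPoly (M ↾ (S : Set α)))
    (htC : ∀ S ∈ propSubsetsContaining M e,
      (X 0 + X 1) * tC S = gPoly (mcontract M (S : Set α))) :
    t = subX0 t
      + X 0 * ∑ S ∈ propSubsetsContaining M e, subX0 (tR S) * subY0 (tC S) := by
  classical
  have heg : e ∈ groundFinset M := mem_groundFinset.mpr he
  have hkey := key ((groundFinset M).card) M e le_rfl heg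
  have hP : (groundFinset M).powerset.filter (fun S => e ∈ S)
      = insert (groundFinset M) (propSubsetsContaining M e) := by
    ext S
    simp only [Finset.mem_filter, Finset.mem_powerset, Finset.mem_insert,
      propSubsetsContaining]
    constructor
    · rintro ⟨hsub, hmem⟩
      by_cases hS : S = groundFinset M
      · exact Or.inl hS
      · exact Or.inr ⟨hsub, hmem, hS⟩
    · rintro (rfl | ⟨hsub, hmem, _⟩)
      · exact ⟨Finset.Subset.rfl, heg⟩
      · exact ⟨hsub, hmem⟩
  have hnotmem : groundFinset M ∉ propSubsetsContaining M e := by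
    simp [propSubsetsContaining]
  rw [hP, Finset.sum_insert hnotmem] at hkey
  have hrestr : M ↾ ((↑(groundFinset M)) : Set α) = M := by
    rw [groundFinset_coe, Matroid.restrict_ground_eq_self]
  have hcontr : gPoly (mcontract M ((↑(groundFinset M)) : Set α)) = 1 := by
    apply gPoly_of_ground_empty
    rw [groundFinset_mcontract]
    simp
  rw [hrestr, hcontr, map_one, mul_one] at hkey
  have hX1t : X 1 * subX0 t = subX0 (gPoly M) := by
    have h := congrArg (fun p => subX0 p) ht
    simp only [map_mul, map_add, subX0_X0, subX0_X1, zero_add] at h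
    exact h
  have hSum : X 0 * (X 1 * ∑ S ∈ propSubsetsContaining M e, subX0 (tR S) * subY0 (tC S))
      = ∑ S ∈ propSubsetsContaining M e,
          subX0 (gPoly (M ↾ (↑S : Set α))) * subY0 (gPoly (mcontract M (↑S : Set α))) := by
    rw [Finset.mul_sum, Finset.mul_sum]
    refine Finset.sum_congr rfl fun S hS => ?_
    have h1 := congrArg (fun p => subX0 p) (htR S hS)
    have h2 := congrArg (fun p => subY0 p) (htC S hS)
    simp only [map_mul, map_add, subX0_X0, subX0_X1, subY0_X0, subY0_X1, zero_add,
      add_zero] at h1 h2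
    rw [← h1, ← h2]
    ring
  have hc0 : (X 0 * (X 1 * (X 0 + X 1)) : MvPolynomial (Fin 4) ℤ) ≠ 0 := by
    intro h
    have h2 := congrArg (MvPolynomial.eval (fun _ : Fin 4 => (1 : ℤ))) h
    simp at h2
  apply mul_left_cancel₀ hc0
  calc X 0 * (X 1 * (X 0 + X 1)) * t
      = X 0 * X 1 * ((X 0 + X 1) * t) := by ring
    _ = X 0 * X 1 * gPoly M := by rw [ht]
    _ = X 0 * (X 1 * (X 0 + X 1)) * (subX0 t
        + X 0 * ∑ S ∈ propSubsetsContaining M e, subX0 (tR S) * subY0 (tC S)) := by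
        linear_combination X 0 * hkey - (X 0 * (X 0 + X 1)) * hX1t
          - (X 0 * (X 0 + X 1)) * hSum
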